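/- Let B be a block, G the graph obtained by attaching whiskers to vertices v_1, ..., v_k of B, and assume G is combinatorially unmixed. Let v be one of the v_i. If every vertex of N_B(v) (the neighbors of v inside B) is itself one of the whiskered vertices v_1, ..., v_k, then N_B[v] = V(B), i.e., v together with its neighbors in B is all of V(B). -/

import Mathlib

open SimpleGraph Finset

variable {V : Type*}

/-- Number of connected components of the induced subgraph on the complement of `S`. -/
noncomputable def ncomp (G : SimpleGraph V) (S : Finset V) : ℕ :=
  Nat.card ((G.induce {v | v ∉ S}).ConnectedComponent)

/-- `S` is a cut set of `G`. -/
def cutSet [DecidableEq V] (G : SimpleGraph V) (S : Finset V) : Prop :=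
  S = ∅ ∨ ∀ i ∈ S, ncomp G (S.erase i) < ncomp G S

/-- `G` is combinatorially unmixed. -/
def unmixed [DecidableEq V] (G : SimpleGraph V) : Prop :=
  G.Connected ∧ ∀ S : Finset V, cutSet G S → ncomp G S = S.card + 1

/-- `G` is accessible. -/
def accessible [DecidableEq V] (G : SimpleGraph V) : Prop :=
  unmixed G ∧ ∀ S : Finset V, cutSet G S → S ≠ ∅ → ∃ s ∈ S, cutSet G (S.erase s)

/-- A block: connected with no cut vertices. -/
def isBlock [DecidableEq V] (G : SimpleGraph V) : Prop :=
  G.Connected ∧ ∀ v : V, ¬ cutSet G {v}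

/-- The graph obtained from `B` by attaching a whisker (pendant leaf) at each `f i`. -/
def whisker {k : ℕ} (B : SimpleGraph V) (f : Fin k → V) : SimpleGraph (V ⊕ Fin k) :=
  SimpleGraph.fromRel (fun x y => match x, y with
    | Sum.inl a, Sum.inl b => B.Adj a b
    | Sum.inl a, Sum.inr i => a = f i
    | _, _ => False)

/-- A free vertex: a vertex contained in a unique maximal clique. -/
def freeVertex (G : SimpleGraph V) (v : V) : Prop :=
  ∃! s : Set V, v ∈ s ∧ G.IsClique s ∧ ∀ t, G.IsClique t → s ⊆ t → s = t

/-!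
Let `T` be the set of `B`-neighbours of `v = f i`, all of them whiskered. In `G \ T` the leaf of
each vertex of `T` is isolated, `v` only reaches its own leaves, and a vertex `u ∉ N_B[v]` lies in
yet another component, so `G \ T` has at least `|T| + 2` components. But `T` is a cut set:
putting a vertex of `T` back joins its leaf to the component of `v`. Unmixedness then says that
`G \ T` has exactly `|T| + 1` components.
-/

namespace SimpleGraph

theorem Reachable.induce_mem_of_forall_adj {G : SimpleGraph V} {s C : Set V}
    (hC : ∀ a ∈ C, ∀ b ∈ s, G.Adj a b → b ∈ C) {x y : s} (hr : (G.induce s).Reachable x y)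
    (hx : x.1 ∈ C) : y.1 ∈ C := by
  obtain ⟨p⟩ := hr
  induction p with
  | nil => exact hx
  | cons hadj _ ih => exact ih (hC _ hx _ (Subtype.prop _) hadj)

end SimpleGraph

theorem ncomp_erase_lt [Finite V] [DecidableEq V] {G : SimpleGraph V} {S : Finset V}
    {s x y : V} (hx : x ∉ S) (hy : y ∉ S) (hsx : G.Adj s x) (hsy : G.Adj s y)
    (hxy : ¬ (G.induce {v | v ∉ S}).Reachable ⟨x, hx⟩ ⟨y, hy⟩) :
    ncomp G (S.erase s) < ncomp G S := by
  have hle : {v | v ∉ S} ⊆ {v | v ∉ S.erase s} := fun v hv hv' => hv (mem_of_mem_erase hv')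
  set H := G.induce {v | v ∉ S}
  set G' := G.induce {v | v ∉ S.erase s}
  have hs' : s ∉ S.erase s := notMem_erase s S
  have hsx' : G'.Adj ⟨s, hs'⟩ ⟨x, hle hx⟩ := hsx
  have hsy' : G'.Adj ⟨s, hs'⟩ ⟨y, hle hy⟩ := hsy
  set φ := ConnectedComponent.map (G.induceHomOfLE hle).toHom
  have hsurj : Function.Surjective φ := by
    refine ConnectedComponent.ind fun ⟨w, hw⟩ => ?_
    by_cases hwS : w ∈ S
    · obtain rfl : w = s := by_contra fun hne => hw (mem_erase.mpr ⟨hne, hwS⟩)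
      exact ⟨H.connectedComponentMk ⟨x, hx⟩, (ConnectedComponent.sound hsx'.reachable).symm⟩
    · exact ⟨H.connectedComponentMk ⟨w, hwS⟩, rfl⟩
  have hninj : ¬ Function.Injective φ := fun hinj => hxy <| ConnectedComponent.eq.mp <|
    hinj <| ConnectedComponent.sound (hsx'.reachable.symm.trans hsy'.reachable)
  have := Fintype.ofFinite H.ConnectedComponent
  have := Fintype.ofFinite G'.ConnectedComponent
  simpa only [ncomp, Nat.card_eq_fintype_card] using
    Fintype.card_lt_of_surjective_not_injective φ hsurj hninj

section whisker

variable {k : ℕ} {B : SimpleGraph V} {f : Fin k → V}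

@[simp]
theorem whisker_adj_inl_inl {a b : V} : (whisker B f).Adj (.inl a) (.inl b) ↔ B.Adj a b :=
  ⟨fun h => h.2.elim id Adj.symm, fun h => ⟨by simpa using h.ne, Or.inl h⟩⟩

@[simp]
theorem whisker_adj_inl_inr {a : V} {j : Fin k} : (whisker B f).Adj (.inl a) (.inr j) ↔ a = f j :=
  ⟨fun h => h.2.resolve_right id, fun h => ⟨by simp, Or.inl h⟩⟩

@[simp]
theorem whisker_adj_inr_inl {a : V} {j : Fin k} :
    (whisker B f).Adj (.inr j) (.inl a) ↔ a = f j := by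
  rw [adj_comm]; exact whisker_adj_inl_inr

@[simp]
theorem not_whisker_adj_inr_inr {j j' : Fin k} : ¬ (whisker B f).Adj (.inr j) (.inr j') :=
  fun h => h.2.elim id id

theorem whisker_induce_reachable_inr {s : Set (V ⊕ Fin k)} {j : Fin k} (hj : .inl (f j) ∉ s)
    {x y : s} (hr : ((whisker B f).induce s).Reachable x y) (hx : x.1 = .inr j) :
    y.1 = .inr j := by
  refine hr.induce_mem_of_forall_adj (C := {.inr j}) ?_ hx
  rintro _ rfl (b | j') hb hadj
  · exact absurd (whisker_adj_inr_inl.mp hadj ▸ hb) hj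
  · exact absurd hadj not_whisker_adj_inr_inr

theorem whisker_induce_reachable_inl {s : Set (V ⊕ Fin k)} {a : V}
    (ha : ∀ b, B.Adj a b → .inl b ∉ s) {x y : s}
    (hr : ((whisker B f).induce s).Reachable x y) (hx : x.1 = .inl a) :
    Sum.elim (· = a) (fun j => f j = a) y.1 := by
  refine hr.induce_mem_of_forall_adj (C := {w | Sum.elim (· = a) (fun j => f j = a) w}) ?_
    (by simp [hx])
  rintro (c | j) hc (d | j') hd hadj <;>
    simp only [Set.mem_ofPred_eq, Sum.elim_inl, Sum.elim_inr] at hc ⊢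
  · exact absurd hd (ha d (hc ▸ whisker_adj_inl_inl.mp hadj))
  · exact (whisker_adj_inl_inr.mp hadj) ▸ hc
  · exact (whisker_adj_inr_inl.mp hadj).trans hc
  · exact absurd hadj not_whisker_adj_inr_inr

theorem cutSet_whisker [Finite V] [DecidableEq V] {S : Finset (V ⊕ Fin k)} {a : V}
    (ha : .inl a ∉ S) (hS : ∀ t ∈ S, ∃ j, t = .inl (f j) ∧ B.Adj a (f j) ∧ .inr j ∉ S) :
    cutSet (whisker B f) S := by
  refine Or.inr fun t ht => ?_
  obtain ⟨j, rfl, hadj, hj⟩ := hS t ht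
  exact ncomp_erase_lt ha hj (whisker_adj_inl_inl.mpr hadj.symm) (whisker_adj_inl_inr.mpr rfl)
    fun hr => Sum.inl_ne_inr (whisker_induce_reachable_inr (not_not.mpr ht) hr.symm rfl)

theorem card_add_two_le_ncomp_whisker [Finite V] {S : Finset (V ⊕ Fin k)} {a u : V}
    (ha : .inl a ∉ S) (hu : .inl u ∉ S) (hua : u ≠ a) (hS : ∀ b, B.Adj a b → .inl b ∈ S)
    (J : Finset (Fin k)) (hJ : ∀ j ∈ J, .inl (f j) ∈ S ∧ .inr j ∉ S) :
    J.card + 2 ≤ ncomp (whisker B f) S := by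
  classical
  set H := (whisker B f).induce {v | v ∉ S}
  have := Fintype.ofFinite H.ConnectedComponent
  set cv := H.connectedComponentMk ⟨.inl a, ha⟩
  set cu := H.connectedComponentMk ⟨.inl u, hu⟩
  set leaf : J → H.ConnectedComponent := fun j => H.connectedComponentMk ⟨.inr j, (hJ j j.2).2⟩
  have leaf_eq : ∀ j w, leaf j = H.connectedComponentMk w → w.1 = .inr j.1 := fun j w hw =>
    whisker_induce_reachable_inr (not_not.mpr (hJ j j.2).1) (ConnectedComponent.eq.mp hw) rfl
  have hcv : cv ∉ insert cu (univ.image leaf) := by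
    simp only [mem_insert, mem_image, mem_univ, true_and, not_or, not_exists]
    refine ⟨fun hvu => hua ?_, fun j hj => by simpa using leaf_eq j _ hj⟩
    simpa using whisker_induce_reachable_inl (fun b hb => not_not.mpr (hS b hb))
      (ConnectedComponent.eq.mp hvu) rfl
  have hcu : cu ∉ univ.image leaf := by
    simp only [mem_image, mem_univ, true_and, not_exists]
    exact fun j hj => by simpa using leaf_eq j _ hj
  have hleaf : Function.Injective leaf := fun j j' h =>
    (Subtype.ext (Sum.inr_injective (leaf_eq j _ h))).symm
  calc J.card + 2 = (insert cv (insert cu (univ.image leaf))).card := by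
        rw [card_insert_of_notMem hcv, card_insert_of_notMem hcu,
          card_image_of_injective _ hleaf, card_univ, Fintype.card_coe]
    _ ≤ ncomp (whisker B f) S := by
        rw [ncomp, Nat.card_eq_fintype_card]
        exact card_le_univ _

end whisker

theorem neighbors_all_whiskered_closed_nbhd_eq_univ_general [Fintype V] [DecidableEq V] {k : ℕ}
    (B : SimpleGraph V) (f : Fin k → V)
    (hu : unmixed (whisker B f)) (i : Fin k)
    (h : ∀ u, B.Adj (f i) u → u ∈ Set.range f) :
    ∀ u : V, u = f i ∨ B.Adj (f i) u := by
  classical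
  intro u
  by_contra! ⟨hne, hnadj⟩
  set J := univ.filter fun j => B.Adj (f i) (f j)
  set T : Finset (V ⊕ Fin k) := J.image (Sum.inl ∘ f)
  have mem_T : ∀ b, .inl b ∈ T ↔ B.Adj (f i) b := fun b => by
    simp only [T, J, mem_image, mem_filter, mem_univ, true_and, Function.comp_apply,
      Sum.inl.injEq]
    exact ⟨fun ⟨j, hj, hjb⟩ => hjb ▸ hj,
      fun hb => (h b hb).imp fun j (hj : f j = b) => ⟨hj ▸ hb, hj⟩⟩
  have inr_notMem_T : ∀ j, .inr j ∉ T := by simp [T]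
  have hfi : .inl (f i) ∉ T := (mem_T _).not.mpr B.irrefl
  have hcut : cutSet (whisker B f) T := cutSet_whisker hfi fun t ht => by
    obtain ⟨j, hj, rfl⟩ := mem_image.mp ht
    exact ⟨j, rfl, (mem_filter.mp hj).2, inr_notMem_T j⟩
  have hlow : J.card + 2 ≤ ncomp (whisker B f) T :=
    card_add_two_le_ncomp_whisker hfi ((mem_T u).not.mpr hnadj) hne (fun b => (mem_T b).mpr) J
      fun j hj => ⟨(mem_T _).mpr (mem_filter.mp hj).2, inr_notMem_T j⟩
  have : T.card ≤ J.card := card_image_le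
  have := hu.2 T hcut
  omega

theorem neighbors_all_whiskered_closed_nbhd_eq_univ [Fintype V] [DecidableEq V] {k : ℕ}
    (B : SimpleGraph V) (hB : isBlock B) (f : Fin k → V) (hf : Function.Injective f)
    (hu : unmixed (whisker B f)) (i : Fin k)
    (h : ∀ u, B.Adj (f i) u → u ∈ Set.range f) :
    ∀ u : V, u = f i ∨ B.Adj (f i) u :=
  neighbors_all_whiskered_closed_nbhd_eq_univ_general B f hu i h
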